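/- Let Ω₁ and Ω₂ be P-hyperconvex domains in ℂⁿ whose intersection Ω := Ω₁ ∩ Ω₂ is nonempty and connected. Then Ω is P-hyperconvex. -/

import Mathlib

open MeasureTheory Metric Set Filter

noncomputable section

/-- The positive part of an extended real number, as an element of `ℝ≥0∞`. -/
def erealPos (x : EReal) : ENNReal := if x = ⊤ then ⊤ else ENNReal.ofReal x.toReal

/-- The integral of an extended-real-valued function `u` against a measure `μ`,
defined as the difference of the (unsigned) lower integrals of the positive and
negative parts of `u`. -/
def erealIntegral {α : Type*} [MeasurableSpace α] (μ : Measure α) (u : α → EReal) : EReal :=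
  ((∫⁻ a, erealPos (u a) ∂μ : ENNReal) : EReal) - ((∫⁻ a, erealPos (-(u a)) ∂μ : ENNReal) : EReal)

/-- The normalized "angle" measure on `(0, 2π]`, used to express averages over circles. -/
def circleAngleMeasure : Measure ℝ :=
  (ENNReal.ofReal (2 * Real.pi))⁻¹ • volume.restrict (Set.Ioc 0 (2 * Real.pi))

/-- A function `u` with values in `[-∞, ∞)` is plurisubharmonic on an open set
`U ⊆ ℂⁿ` if it is upper semicontinuous on `U`, takes no value `+∞` on `U`, and
satisfies the sub-mean-value inequality on every closed disc of every complex line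
contained in `U`. -/
def PshOn {n : ℕ} (u : (Fin n → ℂ) → EReal) (U : Set (Fin n → ℂ)) : Prop :=
  UpperSemicontinuousOn u U ∧ (∀ z ∈ U, u z ≠ ⊤) ∧
  ∀ (a b : Fin n → ℂ) (r : ℝ), 0 < r →
    (∀ w : ℂ, ‖w‖ ≤ r → a + w • b ∈ U) →
    u a ≤ erealIntegral circleAngleMeasure
      (fun θ : ℝ => u (a + ((r : ℝ) * Complex.exp (θ * Complex.I)) • b))

/-- `u : ℂⁿ → ℝ` belongs to `PSH°(X)` (for `X` compact) if there is an open
neighborhood `U ⊇ X` and a continuous plurisubharmonic function `v` on `U`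
with `v = u` on `X`. -/
def PshO {n : ℕ} (u : (Fin n → ℂ) → ℝ) (X : Set (Fin n → ℂ)) : Prop :=
  ∃ U : Set (Fin n → ℂ), IsOpen U ∧ X ⊆ U ∧
    ∃ v : (Fin n → ℂ) → ℝ, ContinuousOn v U ∧ PshOn (fun z => (v z : EReal)) U ∧
      ∀ z ∈ X, u z = v z

/-- The Jensen measures at `z` with respect to the compact set `X`: Borel probability
measures supported in `X` such that `u z ≤ ∫ u dμ` for all `u ∈ PSH°(X)`. -/
def JensenMeasures {n : ℕ} (X : Set (Fin n → ℂ)) (z : Fin n → ℂ) :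
    Set (Measure (Fin n → ℂ)) :=
  {μ | IsProbabilityMeasure μ ∧ μ Xᶜ = 0 ∧
    ∀ u : (Fin n → ℂ) → ℝ, PshO u X → u z ≤ ∫ x, u x ∂μ}

/-- An upper semicontinuous function `u : X → [-∞, ∞)` is plurisubharmonic on the
compact set `X` if `u z ≤ ∫ u dμ` for every `z ∈ X` and every Jensen measure
`μ ∈ J_z(X)`. -/
def PshCompact {n : ℕ} (u : (Fin n → ℂ) → EReal) (X : Set (Fin n → ℂ)) : Prop :=
  UpperSemicontinuousOn u X ∧ (∀ z ∈ X, u z ≠ ⊤) ∧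
  ∀ z ∈ X, ∀ μ ∈ JensenMeasures X z, u z ≤ erealIntegral μ u

/-- A (bounded) domain: a bounded, connected, open subset of `ℂⁿ`. -/
def IsBoundedDomain {n : ℕ} (Ω : Set (Fin n → ℂ)) : Prop :=
  IsOpen Ω ∧ IsConnected Ω ∧ Bornology.IsBounded Ω

/-- The defining property of P-hyperconvexity: a non-constant function
`φ ∈ PSH(Ω̄) ∩ C(Ω̄)` vanishing on `∂Ω`. -/
def PHxExhaustion {n : ℕ} (Ω : Set (Fin n → ℂ)) : Prop :=
  ∃ φ : (Fin n → ℂ) → ℝ,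
    PshCompact (fun z => (φ z : EReal)) (closure Ω) ∧ ContinuousOn φ (closure Ω) ∧
    (∃ z ∈ closure Ω, ∃ w ∈ closure Ω, φ z ≠ φ w) ∧
    ∀ z ∈ frontier Ω, φ z = 0

/-- A bounded domain `Ω ⊂ ℂⁿ` is P-hyperconvex if there is a non-constant
`φ ∈ PSH(Ω̄) ∩ C(Ω̄)` with `φ = 0` on `∂Ω`. -/
def IsPHyperconvex {n : ℕ} (Ω : Set (Fin n → ℂ)) : Prop :=
  IsBoundedDomain Ω ∧ PHxExhaustion Ω

/-- A bounded domain `Ω ⊂ ℂⁿ` is hyperconvex if there is a non-constant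
`φ ∈ PSH(Ω) ∩ C(Ω̄)` with `φ = 0` on `∂Ω`. -/
def IsHyperconvex {n : ℕ} (Ω : Set (Fin n → ℂ)) : Prop :=
  IsBoundedDomain Ω ∧
  ∃ φ : (Fin n → ℂ) → ℝ,
    PshOn (fun z => (φ z : EReal)) Ω ∧ ContinuousOn φ (closure Ω) ∧
    (∃ z ∈ closure Ω, ∃ w ∈ closure Ω, φ z ≠ φ w) ∧
    ∀ z ∈ frontier Ω, φ z = 0

end

/-!
Take `max φ₁ φ₂`. Plurisubharmonicity on the compact set `closure (Ω₁ ∩ Ω₂)` passes to it,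
because a Jensen measure for a smaller compact set is also one for a larger set and the Jensen
inequality is stable under `max`. For the boundary values and non-constancy one needs
`φᵢ ≤ 0` on `closure Ωᵢ` and `φᵢ < 0` on `Ωᵢ`. Push-forwards of the normalized arc-length measure
on circles in complex lines are Jensen measures, so `φᵢ` has the sub-mean-value property on
discs. The strong maximum principle on the connected set `Ωᵢ` then pushes the maximum of `φᵢ`
onto `∂Ωᵢ`, where `φᵢ = 0`.
-/

open scoped Real Topology

instance : IsProbabilityMeasure circleAngleMeasure := by
  constructor
  rw [circleAngleMeasure, Measure.smul_apply, Measure.restrict_apply MeasurableSet.univ,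
    univ_inter, Real.volume_Ioc, sub_zero, smul_eq_mul]
  exact ENNReal.inv_mul_cancel (ENNReal.ofReal_pos.mpr (by positivity)).ne' ENNReal.ofReal_ne_top

theorem Continuous.integrable_circleAngleMeasure {g : ℝ → ℝ} (hg : Continuous g) :
    Integrable g circleAngleMeasure :=
  hg.integrableOn_Ioc.smul_measure
    (ENNReal.inv_ne_top.mpr (ENNReal.ofReal_pos.mpr (by positivity)).ne')

theorem Continuous.eqOn_Ioc_of_le_of_le_integral_circleAngleMeasure {g : ℝ → ℝ}
    (hg : Continuous g) {M : ℝ} (hle : ∀ θ, g θ ≤ M)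
    (hM : M ≤ ∫ θ, g θ ∂circleAngleMeasure) : EqOn g (fun _ => M) (Ioc 0 (2 * π)) := by
  have hint := hg.integrable_circleAngleMeasure
  have hconst : ∫ _ : ℝ, M ∂circleAngleMeasure = M := by simp
  have hae : g =ᵐ[circleAngleMeasure] fun _ => M := by
    refine (integral_eq_iff_of_ae_le hint (integrable_const M) (ae_of_all _ hle)).mp ?_
    exact le_antisymm (integral_mono hint (integrable_const M) hle) (hconst.trans_le hM)
  rw [circleAngleMeasure,
    Measure.ae_ennreal_smul_measure_eq (ENNReal.inv_ne_zero.mpr ENNReal.ofReal_ne_top)] at hae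
  exact Measure.eqOn_Ioc_of_ae_eq volume hae hg.continuousOn continuousOn_const

theorem erealPos_coe (x : ℝ) : erealPos x = ENNReal.ofReal x := by
  rw [erealPos, if_neg (EReal.coe_ne_top x), EReal.toReal_coe]

theorem erealIntegral_coe {α : Type*} [MeasurableSpace α] {μ : Measure α} {g : α → ℝ}
    (hg : Integrable g μ) :
    erealIntegral μ (fun a => (g a : EReal)) = ((∫ a, g a ∂μ : ℝ) : EReal) := by
  have hneg : ∫⁻ a, ENNReal.ofReal (-g a) ∂μ ≠ ⊤ := hg.neg.lintegral_lt_top.ne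
  simp only [erealIntegral, ← EReal.coe_neg, erealPos_coe]
  rw [integral_eq_lintegral_pos_part_sub_lintegral_neg_part hg, EReal.coe_sub,
    EReal.coe_ennreal_toReal hg.lintegral_lt_top.ne, EReal.coe_ennreal_toReal hneg]

theorem ContinuousOn.integrable_of_measure_compl_eq_zero {α : Type*} [TopologicalSpace α]
    [T2Space α] [MeasurableSpace α] [OpensMeasurableSpace α] {X : Set α} (hX : IsCompact X)
    {μ : Measure α} [IsFiniteMeasure μ] (hμ : μ Xᶜ = 0) {φ : α → ℝ} (hφ : ContinuousOn φ X) :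
    Integrable φ μ := by
  have h := hφ.integrableOn_compact hX (μ := μ)
  rwa [IntegrableOn, Measure.restrict_eq_self_of_ae_mem (ae_iff.mpr hμ)] at h

section Jensen

variable {n : ℕ}

theorem jensenMeasures_mono {X Y : Set (Fin n → ℂ)} (hXY : X ⊆ Y) (z : Fin n → ℂ) :
    JensenMeasures X z ⊆ JensenMeasures Y z := by
  rintro μ ⟨hprob, hnull, hsub⟩
  refine ⟨hprob, measure_mono_null (compl_subset_compl.mpr hXY) hnull, ?_⟩
  rintro u ⟨U, hUo, hYU, v, hvc, hvp, hveq⟩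
  exact hsub u ⟨U, hUo, hXY.trans hYU, v, hvc, hvp, fun p hp => hveq p (hXY hp)⟩

theorem integrable_of_mem_jensenMeasures {X : Set (Fin n → ℂ)} (hX : IsCompact X)
    {φ : (Fin n → ℂ) → ℝ} (hφ : ContinuousOn φ X) {z : Fin n → ℂ} {μ : Measure (Fin n → ℂ)}
    (hμ : μ ∈ JensenMeasures X z) : Integrable φ μ :=
  haveI := hμ.1
  hφ.integrable_of_measure_compl_eq_zero hX hμ.2.1

theorem pshCompact_coe_iff {X : Set (Fin n → ℂ)} (hX : IsCompact X) {φ : (Fin n → ℂ) → ℝ}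
    (hφ : ContinuousOn φ X) :
    PshCompact (fun z => (φ z : EReal)) X ↔
      ∀ z ∈ X, ∀ μ ∈ JensenMeasures X z, φ z ≤ ∫ x, φ x ∂μ := by
  have husc : UpperSemicontinuousOn (fun z => (φ z : EReal)) X :=
    (continuous_coe_real_ereal.comp_continuousOn hφ).upperSemicontinuousOn
  simp only [PshCompact, husc, ne_eq, EReal.coe_ne_top, not_false_eq_true, implies_true,
    true_and]
  refine forall₂_congr fun z _ => forall₂_congr fun μ hμ => ?_
  rw [erealIntegral_coe (integrable_of_mem_jensenMeasures hX hφ hμ), EReal.coe_le_coe_iff]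

theorem PshCompact.mono {u : (Fin n → ℂ) → EReal} {X Y : Set (Fin n → ℂ)}
    (hu : PshCompact u Y) (hXY : X ⊆ Y) : PshCompact u X :=
  ⟨hu.1.mono hXY, fun z hz => hu.2.1 z (hXY hz),
    fun z hz μ hμ => hu.2.2 z (hXY hz) μ (jensenMeasures_mono hXY z hμ)⟩

theorem PshCompact.max {X : Set (Fin n → ℂ)} (hX : IsCompact X) {φ ψ : (Fin n → ℂ) → ℝ}
    (hφc : ContinuousOn φ X) (hψc : ContinuousOn ψ X)
    (hφ : PshCompact (fun z => (φ z : EReal)) X) (hψ : PshCompact (fun z => (ψ z : EReal)) X) :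
    PshCompact (fun z => ((max (φ z) (ψ z) : ℝ) : EReal)) X := by
  rw [pshCompact_coe_iff hX hφc] at hφ
  rw [pshCompact_coe_iff hX hψc] at hψ
  rw [pshCompact_coe_iff hX (hφc.sup hψc)]
  intro z hz μ hμ
  have hφi := integrable_of_mem_jensenMeasures hX hφc hμ
  have hψi := integrable_of_mem_jensenMeasures hX hψc hμ
  exact max_le
    ((hφ z hz μ hμ).trans (integral_mono hφi (hφi.sup hψi) fun x => le_max_left _ _))
    ((hψ z hz μ hμ).trans (integral_mono hψi (hφi.sup hψi) fun x => le_max_right _ _))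

end Jensen

section Circle

variable {n : ℕ}

noncomputable def lineCircle (a b : Fin n → ℂ) (r θ : ℝ) : Fin n → ℂ :=
  a + ((r : ℂ) * Complex.exp (θ * Complex.I)) • b

theorem continuous_lineCircle (a b : Fin n → ℂ) (r : ℝ) : Continuous (lineCircle a b r) := by
  unfold lineCircle
  fun_prop

theorem lineCircle_mem {X : Set (Fin n → ℂ)} {a b : Fin n → ℂ} {r : ℝ} (hr : 0 < r)
    (hdisc : ∀ w : ℂ, ‖w‖ ≤ r → a + w • b ∈ X) (θ : ℝ) : lineCircle a b r θ ∈ X := by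
  refine hdisc _ ?_
  rw [norm_mul, Complex.norm_real, Complex.norm_exp_ofReal_mul_I, mul_one,
    Real.norm_of_nonneg hr.le]

theorem lineCircle_two_pi (a b : Fin n → ℂ) : lineCircle a b 1 (2 * π) = a + b := by
  simp [lineCircle, Complex.exp_two_pi_mul_I]

theorem map_lineCircle_mem_jensenMeasures {X : Set (Fin n → ℂ)} (hX : IsCompact X)
    {a b : Fin n → ℂ} {r : ℝ} (hr : 0 < r) (hdisc : ∀ w : ℂ, ‖w‖ ≤ r → a + w • b ∈ X) :
    circleAngleMeasure.map (lineCircle a b r) ∈ JensenMeasures X a := by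
  set f := lineCircle a b r
  have hf := continuous_lineCircle a b r
  have hnull : circleAngleMeasure.map f Xᶜ = 0 := by
    rw [Measure.map_apply hf.measurable hX.isClosed.measurableSet.compl,
      eq_empty_of_forall_notMem (s := f ⁻¹' Xᶜ) fun θ hθ => hθ (lineCircle_mem hr hdisc θ),
      measure_empty]
  refine ⟨Measure.isProbabilityMeasure_map hf.aemeasurable, hnull, ?_⟩
  rintro u ⟨U, hUo, hXU, v, hvc, hvp, hveq⟩
  have hvX : ContinuousOn v X := hvc.mono hXU
  have hvf : Continuous (v ∘ f) := hvX.comp_continuous hf (lineCircle_mem hr hdisc)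
  have hmean : (v a : EReal) ≤ erealIntegral circleAngleMeasure (fun θ => (v (f θ) : EReal)) :=
    hvp.2.2 a b r hr fun w hw => hXU (hdisc w hw)
  rw [erealIntegral_coe (g := fun θ => v (f θ)) hvf.integrable_circleAngleMeasure,
    EReal.coe_le_coe_iff] at hmean
  have hva : ∫ x, v x ∂circleAngleMeasure.map f = ∫ θ, v (f θ) ∂circleAngleMeasure :=
    integral_map hf.aemeasurable
      (hvX.integrable_of_measure_compl_eq_zero hX hnull).aestronglyMeasurable
  calc u a = v a := hveq a (by simpa using hdisc 0 (by simpa using hr.le))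
    _ ≤ ∫ θ, v (f θ) ∂circleAngleMeasure := hmean
    _ = ∫ x, u x ∂circleAngleMeasure.map f := by
      rw [← hva]
      exact integral_congr_ae ((ae_iff.mpr hnull).mono fun x hx => (hveq x hx).symm)

theorem PshCompact.le_integral_lineCircle {X : Set (Fin n → ℂ)} (hX : IsCompact X)
    {φ : (Fin n → ℂ) → ℝ} (hφc : ContinuousOn φ X) (hφ : PshCompact (fun z => (φ z : EReal)) X)
    {a b : Fin n → ℂ} {r : ℝ} (hr : 0 < r) (hdisc : ∀ w : ℂ, ‖w‖ ≤ r → a + w • b ∈ X) :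
    φ a ≤ ∫ θ, φ (lineCircle a b r θ) ∂circleAngleMeasure := by
  have hμ := map_lineCircle_mem_jensenMeasures hX hr hdisc
  have hint := (integrable_of_mem_jensenMeasures hX hφc hμ).aestronglyMeasurable
  rw [← integral_map (continuous_lineCircle a b r).aemeasurable hint]
  exact (pshCompact_coe_iff hX hφc).mp hφ a (by simpa using hdisc 0 (by simpa using hr.le)) _ hμ

end Circle

section MaximumPrinciple

variable {n : ℕ} {φ : (Fin n → ℂ) → ℝ}

theorem PshCompact.eventually_eq_of_isMaxOn {X : Set (Fin n → ℂ)} (hX : IsCompact X)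
    (hφc : ContinuousOn φ X) (hφ : PshCompact (fun z => (φ z : EReal)) X) {x z : Fin n → ℂ}
    (hmax : IsMaxOn φ X x) (hz : z ∈ interior X) (hzx : φ z = φ x) :
    ∀ᶠ y in 𝓝 z, φ y = φ x := by
  obtain ⟨ε, hε, hball⟩ := Metric.mem_nhds_iff.mp (mem_interior_iff_mem_nhds.mp hz)
  filter_upwards [ball_mem_nhds z hε] with y hy
  have hdisc : ∀ w : ℂ, ‖w‖ ≤ 1 → z + w • (y - z) ∈ X := by
    refine fun w hw => hball ?_
    rw [mem_ball, dist_eq_norm, add_sub_cancel_left, norm_smul, ← dist_eq_norm]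
    exact (mul_le_of_le_one_left dist_nonneg hw).trans_lt hy
  have hcirc := lineCircle_mem one_pos hdisc
  have hmean := hφ.le_integral_lineCircle hX hφc one_pos hdisc
  have hφcirc : Continuous fun θ => φ (lineCircle z (y - z) 1 θ) :=
    hφc.comp_continuous (continuous_lineCircle _ _ _) hcirc
  have heq := hφcirc.eqOn_Ioc_of_le_of_le_integral_circleAngleMeasure
    (fun θ => hmax (hcirc θ)) (hzx ▸ hmean)
  simpa [lineCircle_two_pi] using heq ⟨Real.two_pi_pos, le_rfl⟩

theorem PshCompact.eqOn_closure_of_isMaxOn {D : Set (Fin n → ℂ)} (hD : IsOpen D)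
    (hDc : IsPreconnected D) (hX : IsCompact (closure D)) (hφc : ContinuousOn φ (closure D))
    (hφ : PshCompact (fun z => (φ z : EReal)) (closure D)) {x : Fin n → ℂ}
    (hmax : IsMaxOn φ (closure D) x) (hx : x ∈ D) : EqOn φ (fun _ => φ x) (closure D) := by
  set S := closure D ∩ φ ⁻¹' {φ x}
  have hS : IsClosed S := hφc.preimage_isClosed_of_isClosed isClosed_closure isClosed_singleton
  have hopen : IsOpen (D ∩ S) := by
    refine isOpen_iff_mem_nhds.mpr fun y ⟨hyD, hyS⟩ => ?_
    have hy : y ∈ interior (closure D) := interior_maximal subset_closure hD hyD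
    filter_upwards [hD.eventually_mem hyD, hφ.eventually_eq_of_isMaxOn hX hφc hmax hy hyS.2]
      with w hwD hw using ⟨hwD, subset_closure hwD, hw⟩
  have hDS : D ⊆ D ∩ S :=
    hDc.subset_of_closure_inter_subset hopen ⟨x, hx, hx, subset_closure hx, rfl⟩
    fun y ⟨hy, hyD⟩ => ⟨hyD, closure_minimal inter_subset_right hS hy⟩
  exact fun y hy => (closure_minimal (fun w hw => (hDS hw).2) hS hy).2

end MaximumPrinciple

theorem PshCompact.nonpos_and_neg_of_eq_zero_on_frontier {n : ℕ} {D : Set (Fin n → ℂ)}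
    (hD : IsBoundedDomain D) {φ : (Fin n → ℂ) → ℝ}
    (hφ : PshCompact (fun z => (φ z : EReal)) (closure D)) (hφc : ContinuousOn φ (closure D))
    (hnc : ∃ z ∈ closure D, ∃ w ∈ closure D, φ z ≠ φ w) (hbd : ∀ z ∈ frontier D, φ z = 0) :
    (∀ z ∈ closure D, φ z ≤ 0) ∧ ∀ z ∈ D, φ z < 0 := by
  obtain ⟨hDo, hDc, hDb⟩ := hD
  have hX := hDb.isCompact_closure
  obtain ⟨x, hxX, hmax⟩ := hX.exists_isMaxOn (hDc.nonempty.mono subset_closure) hφc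
  have hlt : ∀ y ∈ D, φ y < φ x := by
    refine fun y hy => (hmax (subset_closure hy)).lt_of_ne fun hyx => ?_
    have hconst := hφ.eqOn_closure_of_isMaxOn hDo hDc.isPreconnected hX hφc
      (fun w hw => hyx ▸ hmax hw) hy
    obtain ⟨z, hz, w, hw, hzw⟩ := hnc
    exact hzw ((hconst hz).trans (hconst hw).symm)
  have hx0 : φ x = 0 := hbd x (hDo.frontier_eq ▸ ⟨hxX, fun hx => (hlt x hx).false⟩)
  exact ⟨fun y hy => hx0 ▸ hmax hy, fun y hy => hx0 ▸ hlt y hy⟩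

theorem Bornology.IsBounded.nonempty_frontier {E : Type*} [NormedAddCommGroup E]
    [NormedSpace ℝ E] [Nontrivial E] {s : Set E} (hs : IsBounded s) (hne : s.Nonempty) :
    (frontier s).Nonempty :=
  nonempty_frontier_iff.mpr ⟨hne, fun h => NormedSpace.unbounded_univ ℝ E (h ▸ hs)⟩

theorem phyperconvex_inter_general {n : ℕ} (Ω₁ Ω₂ : Set (Fin n → ℂ))
    (h₁ : IsPHyperconvex Ω₁) (h₂ : IsPHyperconvex Ω₂)
    (hconn : IsConnected (Ω₁ ∩ Ω₂)) :
    IsPHyperconvex (Ω₁ ∩ Ω₂) := by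
  obtain ⟨hD₁, φ₁, hpsh₁, hc₁, hnc₁, hb₁⟩ := h₁
  obtain ⟨hD₂, φ₂, hpsh₂, hc₂, hnc₂, hb₂⟩ := h₂
  obtain ⟨hle₁, hlt₁⟩ := hpsh₁.nonpos_and_neg_of_eq_zero_on_frontier hD₁ hc₁ hnc₁ hb₁
  obtain ⟨hle₂, hlt₂⟩ := hpsh₂.nonpos_and_neg_of_eq_zero_on_frontier hD₂ hc₂ hnc₂ hb₂
  have hB : Bornology.IsBounded (Ω₁ ∩ Ω₂) := hD₁.2.2.subset inter_subset_left
  have hsub₁ : closure (Ω₁ ∩ Ω₂) ⊆ closure Ω₁ := closure_mono inter_subset_left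
  have hsub₂ : closure (Ω₁ ∩ Ω₂) ⊆ closure Ω₂ := closure_mono inter_subset_right
  have hfr : ∀ z ∈ frontier (Ω₁ ∩ Ω₂), max (φ₁ z) (φ₂ z) = 0 := by
    intro z hz
    rcases frontier_inter_subset Ω₁ Ω₂ hz with ⟨hz₁, hz₂⟩ | ⟨hz₁, hz₂⟩
    · rw [hb₁ z hz₁]; exact max_eq_left (hle₂ z hz₂)
    · rw [hb₂ z hz₂]; exact max_eq_right (hle₁ z hz₁)
  have : Nontrivial (Fin n → ℂ) := by
    obtain ⟨z, -, w, -, hzw⟩ := hnc₁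
    exact nontrivial_of_ne z w fun h => hzw (congrArg φ₁ h)
  obtain ⟨z₀, hz₀⟩ := hconn.nonempty
  obtain ⟨w, hw⟩ := hB.nonempty_frontier ⟨z₀, hz₀⟩
  refine ⟨⟨hD₁.1.inter hD₂.1, hconn, hB⟩, fun z => max (φ₁ z) (φ₂ z),
    (hpsh₁.mono hsub₁).max hB.isCompact_closure (hc₁.mono hsub₁) (hc₂.mono hsub₂)
      (hpsh₂.mono hsub₂),
    (hc₁.mono hsub₁).sup (hc₂.mono hsub₂),
    ⟨w, frontier_subset_closure hw, z₀, subset_closure hz₀,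
      (hfr w hw).trans_ne (max_lt (hlt₁ z₀ hz₀.1) (hlt₂ z₀ hz₀.2)).ne'⟩, hfr⟩

/-- The intersection of two P-hyperconvex domains (if nonempty and connected)
is P-hyperconvex. -/
theorem phyperconvex_inter {n : ℕ} (Ω₁ Ω₂ : Set (Fin n → ℂ))
    (h₁ : IsPHyperconvex Ω₁) (h₂ : IsPHyperconvex Ω₂)
    (hne : (Ω₁ ∩ Ω₂).Nonempty) (hconn : IsConnected (Ω₁ ∩ Ω₂)) :
    IsPHyperconvex (Ω₁ ∩ Ω₂) :=
  phyperconvex_inter_general Ω₁ Ω₂ h₁ h₂ hconn
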